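/- For n ≥ 4, every reset word of the automaton 𝒟'_n has length at least n² - 3n + 4; hence the reset threshold of 𝒟'_n is exactly n² - 3n + 4. -/

import Mathlib

/-!
Every letter adds `1` to the state in `ZMod n`, except that `a` adds `2` at the states `n - 2`
and `n - 1` (a *jump*). Hence a run of length `L` from `q` with `J` jumps ends at `q + L + J`.
On representatives in `{0, …, n - 1}` a letter raises the state by at most `1` and a jump by at
most `2 - n`, so a run from `q` to `1` satisfies `(n - 1) J + 1 ≤ q + L`, while
`J ≡ 1 - q - L (mod n)`. Starting from `q₀ = 2 - L` forces `J ≥ n - 1`, which gives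
`L ≥ n² - 3n + 4` unless `q₀ = n - 1`. In that case the run from `n - 2` has `J ≡ 0`, so it
cannot start with `a`, which jumps there, without making `n` jumps; and an initial `b` moves `q₀`
to `0` without a jump, so the bound applies again from `0`.

Every reset word has a prefix sending all states to `1`, because two states merge only under `a`,
and only into `1`. The word `a (b² a^(n-2))^(n-3) b² a` attains the bound.
-/

/-- The state reached from `q` by reading the word `w`. -/
def run {Q A : Type*} (δ : Q → A → Q) (q : Q) (w : List A) : Q := w.foldl δ q

/-- The automaton `𝒟'_n` on states `0,…,n-1` (paper's `1,…,n` shifted by one):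
the letter `a` (= `true`) sends `i ↦ i+1` for `i < n-2`, `n-2 ↦ 0`, `n-1 ↦ 1`;
the letter `b` (= `false`) is the cyclic shift `i ↦ i+1 (mod n)`. -/
def d1Aut (n : ℕ) (q : ZMod n) : Bool → ZMod n
  | true => if q.val = n - 2 then 0 else if q.val = n - 1 then 1 else q + 1
  | false => q + 1

section Run

variable {Q A : Type*} (δ : Q → A → Q)

@[simp] lemma run_nil (q : Q) : run δ q [] = q := rfl

@[simp] lemma run_cons (q : Q) (c : A) (w : List A) : run δ q (c :: w) = run δ (δ q c) w := rfl

@[simp] lemma run_append (q : Q) (u v : List A) : run δ q (u ++ v) = run δ (run δ q u) v :=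
  List.foldl_append ..

end Run

lemma ZMod.add_natCast_eq_zero_of_val_add_eq {n m : ℕ} [NeZero n] {q : ZMod n}
    (h : q.val + m = n) : q + m = 0 := by
  rw [← ZMod.natCast_zmod_val q, ← Nat.cast_add, h, ZMod.natCast_self]

lemma ZMod.le_of_natCast_eq_natCast {n a b : ℕ} (h : (a : ZMod n) = b) (hb : b < n) :
    b ≤ a := by
  have h' := congrArg ZMod.val h
  rw [ZMod.val_natCast, ZMod.val_natCast_of_lt hb] at h'
  exact h' ▸ Nat.mod_le a n

def jump (n : ℕ) (q : ZMod n) (c : Bool) : ℕ :=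
  if c = true ∧ (q.val = n - 2 ∨ q.val = n - 1) then 1 else 0

def jumps (n : ℕ) : ZMod n → List Bool → ℕ
  | _, [] => 0
  | q, c :: w => jump n q c + jumps n (d1Aut n q c) w

section

variable {n : ℕ}

@[simp] lemma d1Aut_false (q : ZMod n) : d1Aut n q false = q + 1 := rfl

lemma d1Aut_eq_add_jump (hn : 2 ≤ n) (q : ZMod n) (c : Bool) :
    d1Aut n q c = q + 1 + jump n q c := by
  have : NeZero n := ⟨by omega⟩
  cases c with
  | false => simp [jump]
  | true =>
    by_cases h₂ : q.val = n - 2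
    · have : q + 2 = 0 := by
        exact_mod_cast ZMod.add_natCast_eq_zero_of_val_add_eq (m := 2) (by omega)
      simp only [d1Aut, jump, h₂, if_true, true_or, and_self, Nat.cast_one]
      linear_combination -this
    by_cases h₁ : q.val = n - 1
    · have : q + 1 = 0 := by
        exact_mod_cast ZMod.add_natCast_eq_zero_of_val_add_eq (m := 1) (by omega)
      simp only [d1Aut, jump, h₁, if_true, or_true, and_self, Nat.cast_one,
        show n - 1 ≠ n - 2 by omega, if_false]
      linear_combination -this
    · simp [d1Aut, jump, h₁, h₂]

lemma val_d1Aut_add_mul_jump_le (hn : 2 ≤ n) (q : ZMod n) (c : Bool) :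
    (d1Aut n q c).val + (n - 1) * jump n q c ≤ q.val + 1 := by
  have : Fact (1 < n) := ⟨by omega⟩
  by_cases h : c = true ∧ (q.val = n - 2 ∨ q.val = n - 1)
  · obtain ⟨rfl, h₂ | h₁⟩ := h
    · simp only [d1Aut, jump, h₂, ↓reduceIte, true_or, and_self, ZMod.val_zero]
      omega
    · simp only [d1Aut, jump, h₁, show n - 1 ≠ n - 2 by omega, ↓reduceIte, or_true, and_self,
        ZMod.val_one]
      omega
  · have hstep : d1Aut n q c = q + 1 := by simp [d1Aut_eq_add_jump hn, jump, h]
    simpa [jump, h, hstep, ZMod.val_one] using ZMod.val_add_le q 1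

lemma val_run_add_mul_jumps_le (hn : 2 ≤ n) (q : ZMod n) (w : List Bool) :
    (run (d1Aut n) q w).val + (n - 1) * jumps n q w ≤ q.val + w.length := by
  induction w generalizing q with
  | nil => simp [jumps]
  | cons c w ih =>
    have := ih (d1Aut n q c)
    have := val_d1Aut_add_mul_jump_le hn q c
    simp only [run_cons, jumps, List.length_cons, mul_add]
    omega

lemma run_eq_add_length_add_jumps (hn : 2 ≤ n) (q : ZMod n) (w : List Bool) :
    run (d1Aut n) q w = q + w.length + jumps n q w := by
  induction w generalizing q with
  | nil => simp [jumps]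
  | cons c w ih =>
    simp only [run_cons, ih, d1Aut_eq_add_jump hn, jumps, List.length_cons]
    push_cast
    ring

lemma mul_jumps_add_one_le (hn : 2 ≤ n) {q : ZMod n} {w : List Bool}
    (h : run (d1Aut n) q w = 1) : (n - 1) * jumps n q w + 1 ≤ q.val + w.length := by
  have : Fact (1 < n) := ⟨by omega⟩
  have := val_run_add_mul_jumps_le hn q w
  rw [h, ZMod.val_one] at this
  omega

lemma natCast_jumps_eq (hn : 2 ≤ n) {q : ZMod n} {w : List Bool}
    (h : run (d1Aut n) q w = 1) : (jumps n q w : ZMod n) = 1 - q - w.length := by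
  rw [← h, run_eq_add_length_add_jumps hn]
  ring

lemma sq_sub_three_mul_add_four_le {n L : ℕ} (hn : 3 ≤ n)
    (h : (n - 1) * (n - 1) + 3 ≤ n + L) : n ^ 2 - 3 * n + 4 ≤ L := by
  have hsq : (n - 1) * (n - 1) + 2 * n = n * n + 1 := by
    obtain ⟨m, rfl⟩ : ∃ m, n = m + 1 := ⟨n - 1, by omega⟩
    rw [Nat.add_sub_cancel]
    ring
  have : 3 * n ≤ n * n := Nat.mul_le_mul_right n hn
  rw [sq]
  omega

lemma length_ge_of_forall_run_eq_one (hn : 3 ≤ n) {w : List Bool}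
    (hw : ∀ q, run (d1Aut n) q w = 1) : n ^ 2 - 3 * n + 4 ≤ w.length := by
  have : Fact (1 < n) := ⟨by omega⟩
  refine sq_sub_three_mul_add_four_le hn ?_
  obtain ⟨q₀, hq₀⟩ : ∃ q₀ : ZMod n, q₀ = 2 - w.length := ⟨_, rfl⟩
  have hJ₀ : (n - 1) * (n - 1) ≤ (n - 1) * jumps n q₀ w := by
    refine Nat.mul_le_mul_left _ (ZMod.le_of_natCast_eq_natCast (n := n) (b := n - 1) ?_ ?_)
    · rw [natCast_jumps_eq (by omega) (hw q₀), Nat.cast_pred (by omega), ZMod.natCast_self,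
        hq₀]
      ring
    · omega
  by_cases hq₀lt : q₀.val < n - 1
  · have := mul_jumps_add_one_le (by omega) (hw q₀)
    omega
  have hq₀1 : q₀ + 1 = 0 := by
    have := ZMod.val_lt q₀
    exact_mod_cast ZMod.add_natCast_eq_zero_of_val_add_eq (m := 1) (by omega)
  obtain _ | ⟨c, t⟩ := w
  · exact absurd (hw 0) zero_ne_one
  cases c with
  | false =>
    have hrun : run (d1Aut n) 0 t = 1 := by simpa [hq₀1] using hw q₀
    have hJ : jumps n q₀ (false :: t) = jumps n 0 t := by simp [jumps, jump, hq₀1]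
    have := mul_jumps_add_one_le (by omega) hrun
    rw [ZMod.val_zero] at this
    rw [hJ] at hJ₀
    simp only [List.length_cons]
    omega
  | true =>
    set q₁ : ZMod n := ((n - 2 : ℕ) : ZMod n)
    have hq₁ : q₁.val = n - 2 := ZMod.val_natCast_of_lt (by omega)
    have hq₁2 : q₁ + 2 = 0 := by
      exact_mod_cast ZMod.add_natCast_eq_zero_of_val_add_eq (m := 2) (by omega)
    have hJ₁ : n ∣ jumps n q₁ (true :: t) := by
      rw [← ZMod.natCast_eq_zero_iff, natCast_jumps_eq (by omega) (hw q₁)]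
      linear_combination hq₀1 - hq₁2 - hq₀
    have hpos : 0 < jumps n q₁ (true :: t) := by simp [jumps, jump, hq₁]
    have hJ₁' : (n - 1) * (n - 1) ≤ (n - 1) * jumps n q₁ (true :: t) :=
      Nat.mul_le_mul_left _ (by have := Nat.le_of_dvd hpos hJ₁; omega)
    have := mul_jumps_add_one_le (by omega) (hw q₁)
    omega

lemma add_one_eq_zero_of_jump (hn : 2 ≤ n) {x : ZMod n} {c : Bool} (hx : jump n x c = 1)
    (hy : jump n (x + 1) c = 0) : x + 1 = 0 := by
  have : NeZero n := ⟨by omega⟩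
  unfold jump at hx hy
  split_ifs at hx hy with hx' hy'
  obtain ⟨rfl, h₂ | h₁⟩ := hx'
  · refine absurd ⟨rfl, Or.inr ?_⟩ hy'
    rw [← ZMod.natCast_zmod_val x, h₂, ← Nat.cast_succ, ZMod.val_natCast_of_lt (by omega)]
    omega
  · exact_mod_cast ZMod.add_natCast_eq_zero_of_val_add_eq (m := 1) (by omega)

lemma d1Aut_eq_one_of_ne (hn : 2 ≤ n) {x y : ZMod n} {c : Bool} (hxy : x ≠ y)
    (h : d1Aut n x c = d1Aut n y c) : d1Aut n x c = 1 := by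
  simp only [d1Aut_eq_add_jump hn] at h ⊢
  have hj : ∀ z, jump n z c = 0 ∨ jump n z c = 1 := fun z => by unfold jump; split_ifs <;> simp
  rcases hj x with hx | hx <;> rcases hj y with hy | hy <;>
    simp only [hx, hy, Nat.cast_zero, Nat.cast_one, add_zero] at h ⊢
  · exact absurd (by linear_combination h) hxy
  · have hy1 := add_one_eq_zero_of_jump hn hy (by rwa [show y + 1 = x by linear_combination -h])
    linear_combination h + hy1
  · have hx1 := add_one_eq_zero_of_jump hn hx (by rwa [show x + 1 = y by linear_combination h])
    linear_combination hx1
  · exact absurd (by linear_combination h) hxy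

lemma exists_prefix_forall_run_eq_one (hn : 2 ≤ n) {w : List Bool}
    (hw : ∃ p, ∀ q, run (d1Aut n) q w = p) :
    ∃ v, v <+: w ∧ ∀ q, run (d1Aut n) q v = 1 := by
  induction w using List.reverseRecOn with
  | nil =>
    obtain ⟨p, hp⟩ := hw
    have : Fact (1 < n) := ⟨by omega⟩
    exact absurd ((hp 0).trans (hp 1).symm) zero_ne_one
  | append_singleton u c ih =>
    obtain ⟨p, hp⟩ := hw
    simp only [run_append, run_cons, run_nil] at hp
    by_cases hu : ∀ q, run (d1Aut n) q u = run (d1Aut n) 0 u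
    · obtain ⟨v, hvu, hv⟩ := ih ⟨_, hu⟩
      exact ⟨v, hvu.trans (List.prefix_append u [c]), hv⟩
    · obtain ⟨q, hq⟩ := not_forall.mp hu
      have h1 := d1Aut_eq_one_of_ne hn hq ((hp q).trans (hp 0).symm)
      exact ⟨u ++ [c], List.prefix_refl _, fun q' => by simp [hp q', ← hp q, h1]⟩

lemma length_ge_of_forall_run_eq (hn : 3 ≤ n) {w : List Bool}
    (hw : ∃ p, ∀ q, run (d1Aut n) q w = p) : n ^ 2 - 3 * n + 4 ≤ w.length := by
  obtain ⟨v, hvw, hv⟩ := exists_prefix_forall_run_eq_one (by omega) hw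
  exact (length_ge_of_forall_run_eq_one (by omega) hv).trans hvw.length_le

def block (n : ℕ) : List Bool := [false, false] ++ List.replicate (n - 2) true

def resetWord (n : ℕ) : List Bool :=
  [true] ++ (List.replicate (n - 3) (block n)).flatten ++ [false, false, true]

lemma length_resetWord (hn : 3 ≤ n) : (resetWord n).length = n ^ 2 - 3 * n + 4 := by
  have : 3 * n ≤ n * n := Nat.mul_le_mul_right n hn
  simp only [resetWord, block, List.length_append, List.length_flatten, List.map_replicate,
    List.sum_replicate, List.length_replicate, List.length_cons, List.length_nil, smul_eq_mul]
  rw [sq, show 0 + 1 + 1 + (n - 2) = n by omega, Nat.sub_mul]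
  omega

lemma d1Aut_true_natCast (hn : 2 ≤ n) {v : ℕ} (hv : v ≤ n - 2) :
    d1Aut n v true = (((v + 1) % (n - 1) : ℕ) : ZMod n) := by
  simp only [d1Aut, ZMod.val_natCast_of_lt (show v < n by omega)]
  by_cases h : v = n - 2
  · rw [if_pos h, show v + 1 = n - 1 by omega, Nat.mod_self, Nat.cast_zero]
  · rw [if_neg h, if_neg (by omega), Nat.mod_eq_of_lt (by omega), Nat.cast_succ]

lemma d1Aut_true_natCast_sub_one (hn : 2 ≤ n) : d1Aut n (n - 1 : ℕ) true = 1 := by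
  simp [d1Aut, ZMod.val_natCast_of_lt (show n - 1 < n by omega), show n - 1 ≠ n - 2 by omega]

lemma run_replicate_true (hn : 2 ≤ n) {v : ℕ} (hv : v ≤ n - 2) (k : ℕ) :
    run (d1Aut n) v (List.replicate k true) = (((v + k) % (n - 1) : ℕ) : ZMod n) := by
  induction k with
  | zero => rw [List.replicate_zero, run_nil, add_zero, Nat.mod_eq_of_lt (by omega)]
  | succ k ih =>
    have : (v + k) % (n - 1) < n - 1 := Nat.mod_lt _ (by omega)
    rw [List.replicate_succ', run_append, ih, run_cons, run_nil,
      d1Aut_true_natCast hn (by omega), Nat.mod_add_mod, add_assoc]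

lemma run_block (hn : 3 ≤ n) {v : ℕ} (hv : v ≤ n - 2) :
    run (d1Aut n) v (block n) = (min (v + 1) (n - 2) : ℕ) := by
  have hbb : (v : ZMod n) + 1 + 1 = (v + 2 : ℕ) := by push_cast; ring
  simp only [block, run_append, run_cons, run_nil, d1Aut_false, hbb]
  rcases (by omega : v + 2 ≤ n - 2 ∨ v + 2 = n - 1 ∨ v + 2 = n) with h | h | h
  · rw [run_replicate_true (by omega) h, show v + 2 + (n - 2) = v + 1 + (n - 1) by omega,
      Nat.add_mod_right, Nat.mod_eq_of_lt (by omega)]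
    congr 1; omega
  · rw [h, show n - 2 = (n - 3) + 1 by omega, List.replicate_succ, run_cons,
      d1Aut_true_natCast_sub_one (by omega), ← Nat.cast_one,
      run_replicate_true (by omega) (by omega), Nat.mod_eq_of_lt (by omega)]
    congr 1; omega
  · rw [h, ZMod.natCast_self, ← Nat.cast_zero, run_replicate_true (by omega) (by omega),
      Nat.mod_eq_of_lt (by omega)]
    congr 1; omega

lemma run_flatten_replicate_block (hn : 3 ≤ n) (k : ℕ) {v : ℕ} (hv : v ≤ n - 2) :
    run (d1Aut n) v (List.replicate k (block n)).flatten = (min (v + k) (n - 2) : ℕ) := by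
  induction k generalizing v with
  | zero => simp [hv]
  | succ k ih =>
    rw [List.replicate_succ, List.flatten_cons, run_append, run_block hn hv, ih (by omega)]
    congr 1
    omega

lemma val_d1Aut_true_le (hn : 3 ≤ n) (q : ZMod n) : (d1Aut n q true).val ≤ n - 2 := by
  have : Fact (1 < n) := ⟨by omega⟩
  by_cases h₂ : q.val = n - 2
  · simp [d1Aut, h₂]
  by_cases h₁ : q.val = n - 1
  · simp only [d1Aut, h₁, show n - 1 ≠ n - 2 by omega, ↓reduceIte, ZMod.val_one]
    omega
  have := ZMod.val_lt q
  have := ZMod.val_add_le q 1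
  simp only [d1Aut, if_neg h₂, if_neg h₁]
  rw [ZMod.val_one] at this
  omega

lemma run_resetWord (hn : 3 ≤ n) (q : ZMod n) : run (d1Aut n) q (resetWord n) = 1 := by
  have : NeZero n := ⟨by omega⟩
  simp only [resetWord, run_append, run_cons, run_nil]
  rw [← ZMod.natCast_zmod_val (d1Aut n q true),
    run_flatten_replicate_block hn _ (val_d1Aut_true_le hn q)]
  set s := min ((d1Aut n q true).val + (n - 3)) (n - 2)
  have hs : (s : ZMod n) + 1 + 1 = (s + 2 : ℕ) := by push_cast; ring
  simp only [d1Aut_false, hs]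
  rcases (by omega : s + 2 = n - 1 ∨ s + 2 = n) with h | h
  · rw [h, d1Aut_true_natCast_sub_one (by omega)]
  · rw [h, ZMod.natCast_self, ← Nat.cast_zero, d1Aut_true_natCast (by omega) (by omega),
      Nat.mod_eq_of_lt (by omega), Nat.cast_one]

end

/-- For `n ≥ 4`, every reset word of `𝒟'_n` has length at least `n² - 3n + 4`;
hence the reset threshold of `𝒟'_n` is exactly `n² - 3n + 4`. -/
theorem stmt_13 (n : ℕ) (hn : 4 ≤ n) :
    (∀ w : List Bool, (∃ p : ZMod n, ∀ q, run (d1Aut n) q w = p) →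
      n ^ 2 - 3 * n + 4 ≤ w.length) ∧
    IsLeast {m : ℕ | ∃ w : List Bool,
      (∃ p : ZMod n, ∀ q, run (d1Aut n) q w = p) ∧ w.length = m} (n ^ 2 - 3 * n + 4) := by
  have hn3 : 3 ≤ n := by omega
  have lower : ∀ w : List Bool, (∃ p, ∀ q, run (d1Aut n) q w = p) →
      n ^ 2 - 3 * n + 4 ≤ w.length :=
    fun w => length_ge_of_forall_run_eq hn3
  refine ⟨lower, ⟨resetWord n, ⟨1, run_resetWord hn3⟩, length_resetWord hn3⟩, ?_⟩
  rintro m ⟨w, hw, rfl⟩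
  exact lower w hw
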